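/- arXiv:1910.04114 — 7 statements merged into one kernel-verified Lean document; each statement's English description precedes it below -/
import Mathlib

section
/- With f and γ_X, γ_Y, γ_Z as defined from f(α,p) = (1-α)/(1-2(1-α)p), for all a,b,c ≥ 0 with a+b+c=1 and all p ∈ [0,1/2), each pairwise sum γ_X+γ_Y, γ_Y+γ_Z, γ_X+γ_Z is nonnegative. In particular γ_X + γ_Y = 2f(c,p) ≥ 0. -/
lemma f_nonneg_aux (α p : ℝ) (h0 : 0 ≤ α) (h1 : α ≤ 1) (hp0 : 0 ≤ p) (hp1 : p < 1/2) :
    0 ≤ (1 - α) / (1 - 2*(1-α)*p) := by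
  apply div_nonneg (by linarith)
  nlinarith [mul_nonneg (by linarith : (0:ℝ) ≤ 1 - α) hp0]

theorem pairwise_rate_sums_nonneg (a b c p : ℝ)
    (ha : 0 ≤ a) (hb : 0 ≤ b) (hc : 0 ≤ c) (habc : a + b + c = 1)
    (hp0 : 0 ≤ p) (hp1 : p < 1/2) :
    let f : ℝ → ℝ := fun α => (1 - α) / (1 - 2*(1-α)*p)
    let γX := -f a + f b + f c
    let γY := f a - f b + f c
    let γZ := f a + f b - f c
    γX + γY = 2 * f c ∧ 0 ≤ γX + γY ∧ 0 ≤ γY + γZ ∧ 0 ≤ γX + γZ := by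
  intro f γX γY γZ
  have hfa : 0 ≤ f a := f_nonneg_aux a p ha (by linarith) hp0 hp1
  have hfb : 0 ≤ f b := f_nonneg_aux b p hb (by linarith) hp0 hp1
  have hfc : 0 ≤ f c := f_nonneg_aux c p hc (by linarith) hp0 hp1
  refine ⟨by simp [γX, γY]; ring, by simp [γX, γY]; linarith,
    by simp [γY, γZ]; linarith, by simp [γX, γZ]; linarith⟩
end

section
/- Let f(α,p) = (1-α)/(1-2(1-α)p), and fix a,b,c ≥ 0 with a+b+c=1. Suppose there exists p₀ ∈ [0,1/2) with f(b,p₀) > f(a,p₀) + f(c,p₀). Then for all p ∈ [p₀,1/2), f(b,p) > f(a,p) + f(c,p); i.e., once the rate γ_Y = f(a,p)-f(b,p)+f(c,p) becomes negative it remains negative for all larger p < 1/2. -/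
theorem negative_rate_persists (a b c p₀ : ℝ)
    (ha : 0 ≤ a) (hb : 0 ≤ b) (hc : 0 ≤ c) (habc : a + b + c = 1)
    (hp₀ : p₀ ∈ Set.Ico (0:ℝ) (1/2))
    (hneg : (1 - b) / (1 - 2*(1-b)*p₀) >
      (1 - a) / (1 - 2*(1-a)*p₀) + (1 - c) / (1 - 2*(1-c)*p₀)) :
    ∀ p ∈ Set.Ico p₀ (1/2 : ℝ),
      (1 - b) / (1 - 2*(1-b)*p) >
        (1 - a) / (1 - 2*(1-a)*p) + (1 - c) / (1 - 2*(1-c)*p) := by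
  obtain ⟨hp00, hp0h⟩ := hp₀
  intro p hp
  obtain ⟨hpp0, hph⟩ := hp
  have hp0 : 0 ≤ p := le_trans hp00 hpp0
  have Da0 : 0 < 1 - 2*(1-a)*p₀ := by nlinarith
  have Db0 : 0 < 1 - 2*(1-b)*p₀ := by nlinarith
  have Dc0 : 0 < 1 - 2*(1-c)*p₀ := by nlinarith
  have Da : 0 < 1 - 2*(1-a)*p := by nlinarith
  have Db : 0 < 1 - 2*(1-b)*p := by nlinarith
  have Dc : 0 < 1 - 2*(1-c)*p := by nlinarith
  rw [gt_iff_lt, div_add_div _ _ (ne_of_gt Da0) (ne_of_gt Dc0),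
    div_lt_div_iff₀ (mul_pos Da0 Dc0) Db0] at hneg
  rw [gt_iff_lt, div_add_div _ _ (ne_of_gt Da) (ne_of_gt Dc),
    div_lt_div_iff₀ (mul_pos Da Dc) Db]
  have hb1 : b ≤ 1 := by linarith
  have hkey : 0 ≤ (1-a)*(1-c)*((p-p₀)*(1-(1-b)*(p+p₀))) := by
    apply mul_nonneg (mul_nonneg (by linarith) (by linarith))
    apply mul_nonneg (by linarith)
    nlinarith
  linarith [hkey, hneg]
end

section
/- For 0 < a, b and a+b < 1, Γ_Y(a,b) = (a+b)/(1-a-b) + (1-a)/a - (1-b)/b < 0 if and only if b < √5 - 2 and a ∈ (a_-(b), a_+(b)), where a_±(b) = (1/2)(1 - b ± √(b⁴+4b³-2b²-4b+1)/(1+b)). -/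
/-!
Multiplying `Γ_Y` by `a b (1 - a - b) > 0` turns it into the quadratic
`(1 + b) a² - (1 - b²) a + b (1 - b)` in `a`, whose discriminant is
`b⁴ + 4b³ - 2b² - 4b + 1 = (1 - b²)(1 - 4b - b²)`. A quadratic with positive leading coefficient
is negative exactly strictly between its roots; that interval is nonempty only when the
discriminant is positive, i.e. (as `0 < b < 1`) when `b² + 4b < 1`, i.e. `b < √5 - 2`.
-/

open Set

theorem quadratic_neg_iff_mem_Ioo {a b c x : ℝ} (ha : 0 < a) :
    a * (x * x) + b * x + c < 0 ↔
      x ∈ Ioo ((-b - √(discrim a b c)) / (2 * a)) ((-b + √(discrim a b c)) / (2 * a)) := by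
  have h2a : 0 < 2 * a := by positivity
  have hcompleteSquare :
      a * (x * x) + b * x + c = ((2 * a * x + b) ^ 2 - discrim a b c) / (4 * a) := by
    rw [discrim]; field_simp; ring
  calc a * (x * x) + b * x + c < 0 ↔ (2 * a * x + b) ^ 2 < discrim a b c := by
        rw [hcompleteSquare, div_lt_iff₀ (by positivity), zero_mul, sub_neg]
    _ ↔ |2 * a * x + b| < √(discrim a b c) := by rw [Real.lt_sqrt (abs_nonneg _), sq_abs]
    _ ↔ _ := by
        rw [abs_lt, mem_Ioo, div_lt_iff₀ h2a, lt_div_iff₀ h2a]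
        constructor <;> rintro ⟨h₁, h₂⟩ <;> constructor <;> linarith

theorem lt_sqrt_five_sub_two_iff {b : ℝ} (hb : -2 ≤ b) : b < √5 - 2 ↔ b ^ 2 + 4 * b < 1 := by
  rw [lt_sub_iff_add_lt, Real.lt_sqrt (by linarith)]
  constructor <;> intro h <;> linarith

theorem GammaY_eq_div {a b : ℝ} (ha : a ≠ 0) (hb : b ≠ 0) (hc : 1 - a - b ≠ 0) :
    (a + b) / (1 - a - b) + (1 - a) / a - (1 - b) / b
      = ((1 + b) * (a * a) + -(1 - b ^ 2) * a + b * (1 - b)) / (a * b * (1 - a - b)) := by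
  field_simp; ring

theorem discrim_GammaY_quadratic (b : ℝ) :
    discrim (1 + b) (-(1 - b ^ 2)) (b * (1 - b)) = b^4 + 4*b^3 - 2*b^2 - 4*b + 1 := by
  rw [discrim]; ring

theorem GammaY_neg_iff (a b : ℝ) (ha : 0 < a) (hb : 0 < b) (hab : a + b < 1) :
    (a + b)/(1 - a - b) + (1 - a)/a - (1 - b)/b < 0 ↔
      b < Real.sqrt 5 - 2 ∧
      a ∈ Set.Ioo
        ((1/2) * (1 - b - Real.sqrt (b^4 + 4*b^3 - 2*b^2 - 4*b + 1) / (1 + b)))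
        ((1/2) * (1 - b + Real.sqrt (b^4 + 4*b^3 - 2*b^2 - 4*b + 1) / (1 + b))) := by
  have hc : 0 < 1 - a - b := by linarith
  have h1b : 0 < 1 + b := by linarith
  set D := b^4 + 4*b^3 - 2*b^2 - 4*b + 1
  rw [GammaY_eq_div ha.ne' hb.ne' hc.ne', div_lt_iff₀ (by positivity), zero_mul,
    quadratic_neg_iff_mem_Ioo h1b, discrim_GammaY_quadratic]
  have hlo : (-(-(1 - b ^ 2)) - √D) / (2 * (1 + b)) = 1 / 2 * (1 - b - √D / (1 + b)) := by
    field_simp; ring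
  have hhi : (-(-(1 - b ^ 2)) + √D) / (2 * (1 + b)) = 1 / 2 * (1 - b + √D / (1 + b)) := by
    field_simp; ring
  rw [hlo, hhi, and_iff_right_of_imp]
  rintro ⟨hlo_lt, hlt_hi⟩
  have hD : 0 < D := Real.sqrt_pos.1 <| (div_pos_iff_of_pos_right h1b).1 (by linarith)
  have hfactor : D = (1 - b ^ 2) * (1 - (b ^ 2 + 4 * b)) := by ring
  have hdiscr : 0 < 1 - (b ^ 2 + 4 * b) := pos_of_mul_pos_right (hfactor ▸ hD) (by nlinarith)
  rw [lt_sqrt_five_sub_two_iff (by linarith)]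
  linarith
end

section
/- The set S = {(a,b) : a,b > 0, a+b < 1, Γ_Y(a,b) < 0}, with Γ_Y(a,b) = (a+b)/(1-a-b) + (1-a)/a - (1-b)/b, is a convex subset of ℝ². -/
set_option maxHeartbeats 1600000

/-- Characterization of membership in the region `R_Y` by a polynomial inequality. -/
lemma RY_char (a b : ℝ) :
    (0 < a ∧ 0 < b ∧ a + b < 1 ∧
      (a + b)/(1 - a - b) + (1 - a)/a - (1 - b)/b < 0) ↔
    (0 < b ∧ b < 1 ∧ (2*a + b - 1)^2 * (1 + b) < (1 - b)*(1 - 4*b - b^2)) := by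
  constructor
  · rintro ⟨ha, hb, hab, hΓ⟩
    have h1 : 0 < 1 - a - b := by linarith
    have ha' : a ≠ 0 := ne_of_gt ha
    have hb' : b ≠ 0 := ne_of_gt hb
    have h1' : 1 - a - b ≠ 0 := ne_of_gt h1
    have hpos : (0:ℝ) < 4*(a*b*(1-a-b)) := by positivity
    have hkey := mul_neg_of_neg_of_pos hΓ hpos
    have heq : ((a + b)/(1 - a - b) + (1 - a)/a - (1 - b)/b) * (4*(a*b*(1-a-b)))
        = (2*a + b - 1)^2 * (1 + b) - (1 - b)*(1 - 4*b - b^2) := by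
      field_simp
      ring
    rw [heq] at hkey
    exact ⟨hb, by linarith, by linarith⟩
  · rintro ⟨hb, hb1, hineq⟩
    have hsq : 0 ≤ (2*a + b - 1)^2 * (1 + b) := by positivity
    have hP : (1 + b)*(a^2 - (1 - b)*a) + b*(1 - b) < 0 := by nlinarith
    have ha : 0 < a := by
      by_contra hc
      push_neg at hc
      have h2 : 0 ≤ (-a) * (1 - b - a) := by nlinarith
      nlinarith
    have hab : a + b < 1 := by
      by_contra hc
      push_neg at hc
      have h2 : 0 ≤ a * (a - (1 - b)) := by nlinarith
      nlinarith
    have h1 : 0 < 1 - a - b := by linarith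
    have ha' : a ≠ 0 := ne_of_gt ha
    have hb' : b ≠ 0 := ne_of_gt hb
    have h1' : 1 - a - b ≠ 0 := ne_of_gt h1
    have heq2 : (a + b)/(1 - a - b) + (1 - a)/a - (1 - b)/b
        = ((1 + b)*(a^2 - (1 - b)*a) + b*(1 - b)) / (a*b*(1-a-b)) := by
      field_simp
      ring
    refine ⟨ha, hb, hab, ?_⟩
    rw [heq2]
    exact div_neg_of_neg_of_pos hP (by positivity)

/-- Key concavity-type inequality: the condition `w^2 x < x^3 - 8x + 8` is preserved
under convex combinations (for `1 < x < 2`). -/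

lemma RY_N_nonneg (x y t : ℝ) (hx1 : 1 < x) (hy1 : 1 < y)
    (h0 : 0 ≤ t) (h1 : t ≤ 1) (hu : 0 < 4 - 2*x - x^2) (hu2 : 0 < 4 - 2*y - y^2) :
    0 ≤ 2*x*y*(t*x + (1-t)*y)*(x*y - 8) + 24*x*y - 8*t*y^2 - 8*(1-t)*x^2 := by
  have hx0 : (0:ℝ) < x := by linarith
  have hy0 : (0:ℝ) < y := by linarith
  have hx54 : x ≤ 5/4 := by nlinarith
  have hy54 : y ≤ 5/4 := by nlinarith
  set z := t*x + (1-t)*y with hz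
  have hz1 : 1 ≤ z := by rw [hz]; nlinarith
  have hz0 : 0 < z := by linarith
  have hz54 : z ≤ 5/4 := by rw [hz]; nlinarith
  have hub : 4 - 2*x - x^2 ≤ 1 := by nlinarith
  have hub2 : 4 - 2*y - y^2 ≤ 1 := by nlinarith
  have key1 : ((4 - 2*x - x^2) - (4 - 2*y - y^2))^2
      ≤ (4 - 2*x - x^2) + (4 - 2*y - y^2) := by
    nlinarith [mul_pos hu hu2]
  have e1 : (3:ℝ)/4 ≤ y*(2 - x) := by nlinarith
  have e1' : (3:ℝ)/4 ≤ x*(2 - y) := by nlinarith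
  have e2 : (16:ℝ) ≤ (x + y + 2)^2 := by nlinarith
  have e3 : (12:ℝ) ≤ (x + y + 2)^2 * (y*(2 - x)) := by
    have := mul_le_mul e2 e1 (by norm_num) (by positivity)
    linarith
  have e3' : (12:ℝ) ≤ (x + y + 2)^2 * (x*(2 - y)) := by
    have := mul_le_mul e2 e1' (by norm_num) (by positivity)
    linarith
  have c1 : (12:ℝ) ≤ z*((x + y + 2)^2 * (y*(2 - x))) := by
    have := mul_le_mul hz1 e3 (by norm_num) hz0.le
    linarith
  have c1' : (12:ℝ) ≤ z*((x + y + 2)^2 * (x*(2 - y))) := by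
    have := mul_le_mul hz1 e3' (by norm_num) hz0.le
    linarith
  have cxy : x*y ≤ 25/16 := by nlinarith
  have c2 : x*y*z + 8 ≤ 10 := by
    nlinarith [mul_le_mul cxy hz54 hz0.le (by norm_num : (0:ℝ) ≤ 25/16)]
  have m1 : 12*(4 - 2*x - x^2) ≤ z*((x + y + 2)^2 * (y*(2 - x)))*(4 - 2*x - x^2) :=
    mul_le_mul_of_nonneg_right c1 hu.le
  have m2 : 12*(4 - 2*y - y^2) ≤ z*((x + y + 2)^2 * (x*(2 - y)))*(4 - 2*y - y^2) :=
    mul_le_mul_of_nonneg_right c1' hu2.le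
  have m3 : ((4 - 2*x - x^2) - (4 - 2*y - y^2))^2*(x*y*z + 8)
      ≤ ((4 - 2*x - x^2) + (4 - 2*y - y^2))*10 :=
    mul_le_mul key1 c2 (by nlinarith [mul_pos (mul_pos hx0 hy0) hz0]) (by linarith)
  have hid : (2*x*y*z*(x*y - 8) + 24*x*y - 8*t*y^2 - 8*(1-t)*x^2)*(x + y + 2)^2
      = z*((x + y + 2)^2 * (y*(2 - x)))*(4 - 2*x - x^2)
        + z*((x + y + 2)^2 * (x*(2 - y)))*(4 - 2*y - y^2)
        - ((4 - 2*x - x^2) - (4 - 2*y - y^2))^2*(x*y*z + 8) := by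
    rw [hz]; ring
  have big : 0 ≤ (2*x*y*z*(x*y - 8) + 24*x*y - 8*t*y^2 - 8*(1-t)*x^2)*(x + y + 2)^2 := by
    rw [hid]; linarith
  nlinarith [big, (show (0:ℝ) < (x + y + 2)^2 by positivity)]

lemma RY_disc (x y t : ℝ) (hx1 : 1 < x) (hx2 : x < 2) (hy1 : 1 < y) (hy2 : y < 2)
    (h0 : 0 ≤ t) (h1 : t ≤ 1) :
    4*(x^3 - 8*x + 8)*(y^3 - 8*y + 8)*(x*y*(t*x + (1-t)*y)^2)
      ≤ (2*x*y*(t*x + (1-t)*y)*(x*y - 8) + 24*x*y - 8*t*y^2 - 8*(1-t)*x^2)^2 := by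
  have l1 : (0:ℝ) ≤ x - 1 := by linarith
  have l2 : (0:ℝ) ≤ y - 1 := by linarith
  have l3 : (0:ℝ) ≤ 2 - x := by linarith
  have l4 : (0:ℝ) ≤ 2 - y := by linarith
  have hA : 0 ≤ 64*(y-1)*((2-x)*x) + 64*(y-1)^2*(2-y) + 32*(x-1) + 64*(x-1)*(y-1)^2
      + 32*(x-1)*(y-1)^4 + 32*(x-1)^2 + 64*(x-1)^2*(y-1)^3 + 32*(x-1)^2*(y-1)^4 := by
    have hx0 : (0:ℝ) < x := by linarith
    nlinarith [mul_nonneg l2 (mul_nonneg l3 hx0.le), mul_nonneg (mul_nonneg l2 l2) l4,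
      mul_nonneg l1 (mul_nonneg l2 l2), mul_nonneg l1 (pow_nonneg l2 4),
      mul_nonneg (mul_nonneg l1 l1) (pow_nonneg l2 3),
      mul_nonneg (mul_nonneg l1 l1) (pow_nonneg l2 4), mul_nonneg l1 l1]
  have hB : 0 ≤ 32*(y-1)^2*(2-(y-1)) + 32*(x-1)*(y-1)*(2-(y-1)) + 32*(x-1)^2*(2-(y-1))
      + 32*(x-1)*(3-(x-1)^2) + 96*(y-1) + 96*(x-1)^2*(y-1)^3 + 96*(x-1)^3*(y-1)^2
      + 64*(x-1)^3*(y-1)^3 := by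
    have l5 : (0:ℝ) ≤ 2 - (y-1) := by linarith
    have l6 : (0:ℝ) ≤ 3 - (x-1)^2 := by nlinarith
    nlinarith [mul_nonneg (mul_nonneg l2 l2) l5, mul_nonneg (mul_nonneg l1 l2) l5,
      mul_nonneg (mul_nonneg l1 l1) l5, mul_nonneg l1 l6,
      mul_nonneg (mul_nonneg l1 l1) (pow_nonneg l2 3),
      mul_nonneg (pow_nonneg l1 3) (mul_nonneg l2 l2),
      mul_nonneg (pow_nonneg l1 3) (pow_nonneg l2 3)]
  have hC : 0 ≤ 64*(x-1)*(1-(y-1)^2) + 64*(x-1)^2*(2-x) + 32*(y-1) + 32*(y-1)^2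
      + 64*(x-1)^2*(y-1) + 64*(x-1)^3*(y-1)^2 + 32*(x-1)^4*(y-1) + 32*(x-1)^4*(y-1)^2 := by
    have l7 : (0:ℝ) ≤ 1 - (y-1)^2 := by nlinarith
    nlinarith [mul_nonneg l1 l7, mul_nonneg (mul_nonneg l1 l1) l3,
      mul_nonneg (mul_nonneg l1 l1) l2, mul_nonneg (pow_nonneg l1 3) (mul_nonneg l2 l2),
      mul_nonneg (pow_nonneg l1 4) l2, mul_nonneg (pow_nonneg l1 4) (mul_nonneg l2 l2)]
  have hQ : 0 ≤ (1-t)^2 * (64*(y-1)*((2-x)*x) + 64*(y-1)^2*(2-y) + 32*(x-1)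
        + 64*(x-1)*(y-1)^2 + 32*(x-1)*(y-1)^4 + 32*(x-1)^2 + 64*(x-1)^2*(y-1)^3
        + 32*(x-1)^2*(y-1)^4)
      + t*(1-t) * (32*(y-1)^2*(2-(y-1)) + 32*(x-1)*(y-1)*(2-(y-1)) + 32*(x-1)^2*(2-(y-1))
        + 32*(x-1)*(3-(x-1)^2) + 96*(y-1) + 96*(x-1)^2*(y-1)^3 + 96*(x-1)^3*(y-1)^2
        + 64*(x-1)^3*(y-1)^3)
      + t^2 * (64*(x-1)*(1-(y-1)^2) + 64*(x-1)^2*(2-x) + 32*(y-1) + 32*(y-1)^2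
        + 64*(x-1)^2*(y-1) + 64*(x-1)^3*(y-1)^2 + 32*(x-1)^4*(y-1) + 32*(x-1)^4*(y-1)^2) := by
    have q1 := mul_nonneg (sq_nonneg (1-t)) hA
    have q2 := mul_nonneg (mul_nonneg h0 (by linarith : (0:ℝ) ≤ 1 - t)) hB
    have q3 := mul_nonneg (sq_nonneg t) hC
    linarith
  nlinarith [mul_nonneg (sq_nonneg (x - y)) hQ]

lemma RY_key (x y w v t : ℝ) (hx1 : 1 < x) (hx2 : x < 2) (hy1 : 1 < y) (hy2 : y < 2)
    (ht0 : 0 ≤ t) (ht1 : t ≤ 1)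
    (hw : w^2*x < x^3 - 8*x + 8) (hv : v^2*y < y^3 - 8*y + 8) :
    (t*w + (1-t)*v)^2 * (t*x + (1-t)*y)
      < (t*x + (1-t)*y)^3 - 8*(t*x + (1-t)*y) + 8 := by
  rcases ht0.eq_or_lt with rfl | h0
  · norm_num
    linarith [hv]
  rcases ht1.lt_or_eq with h1 | rfl
  swap
  · norm_num
    linarith [hw]
  have hs0 : 0 < 1 - t := by linarith
  have hx0 : (0:ℝ) < x := by linarith
  have hy0 : (0:ℝ) < y := by linarith
  have hw0 : 0 ≤ w^2*x := by positivity
  have hv0 : 0 ≤ v^2*y := by positivity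
  have hNx : 0 < x^3 - 8*x + 8 := lt_of_le_of_lt hw0 hw
  have hNy : 0 < y^3 - 8*y + 8 := lt_of_le_of_lt hv0 hv
  have hu : 0 < 4 - 2*x - x^2 := by
    by_contra hc
    push_neg at hc
    have h2 : (2 - x) * (4 - 2*x - x^2) ≤ 0 :=
      mul_nonpos_of_nonneg_of_nonpos (by linarith) hc
    nlinarith
  have hu2 : 0 < 4 - 2*y - y^2 := by
    by_contra hc
    push_neg at hc
    have h2 : (2 - y) * (4 - 2*y - y^2) ≤ 0 :=
      mul_nonpos_of_nonneg_of_nonpos (by linarith) hc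
    nlinarith
  have hN0 := RY_N_nonneg x y t hx1 hy1 ht0 ht1 hu hu2
  have hE2 := RY_disc x y t hx1 hx2 hy1 hy2 ht0 ht1
  set z := t*x + (1-t)*y with hz
  set N := 2*x*y*z*(x*y - 8) + 24*x*y - 8*t*y^2 - 8*(1-t)*x^2 with hN
  have hz1 : 1 ≤ z := by rw [hz]; nlinarith
  have hz0 : 0 < z := by linarith
  have hprod : (2*(x*y*z*w*v))^2 ≤ N^2 := by
    have h1 : (w^2*x)*(v^2*y) ≤ (x^3 - 8*x + 8)*(y^3 - 8*y + 8) :=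
      mul_le_mul hw.le hv.le hv0 hNx.le
    have h2 : (0:ℝ) ≤ x*y*z^2 := by positivity
    calc (2*(x*y*z*w*v))^2 = 4*((w^2*x)*(v^2*y))*(x*y*z^2) := by ring
      _ ≤ 4*((x^3 - 8*x + 8)*(y^3 - 8*y + 8))*(x*y*z^2) := by nlinarith
      _ ≤ N^2 := by linarith
  have hwvN : 2*(x*y*z*w*v) ≤ N := by nlinarith [hprod, hN0]
  have hid3 : ((z^3 - 8*z + 8) - (t*w + (1-t)*v)^2 * z)*(x*y)
      = t*(1-t)*(N - 2*(x*y*z*w*v)) + t^2*(z*y)*((x^3 - 8*x + 8) - w^2*x)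
        + (1-t)^2*(z*x)*((y^3 - 8*y + 8) - v^2*y) := by
    rw [hN, hz]; ring
  have p1 : 0 ≤ t*(1-t)*(N - 2*(x*y*z*w*v)) :=
    mul_nonneg (mul_nonneg h0.le hs0.le) (by linarith)
  have p2 : 0 < t^2*(z*y)*((x^3 - 8*x + 8) - w^2*x) :=
    mul_pos (mul_pos (pow_pos h0 2) (mul_pos hz0 hy0)) (by linarith)
  have p3 : 0 < (1-t)^2*(z*x)*((y^3 - 8*y + 8) - v^2*y) :=
    mul_pos (mul_pos (pow_pos hs0 2) (mul_pos hz0 hx0)) (by linarith)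
  have hfinal : 0 < ((z^3 - 8*z + 8) - (t*w + (1-t)*v)^2 * z)*(x*y) := by
    rw [hid3]; linarith
  nlinarith [hfinal, mul_pos hx0 hy0]

theorem RY_convex :
    Convex ℝ {x : ℝ × ℝ | 0 < x.1 ∧ 0 < x.2 ∧ x.1 + x.2 < 1 ∧
      (x.1 + x.2)/(1 - x.1 - x.2) + (1 - x.1)/x.1 - (1 - x.2)/x.2 < 0} := by
  intro p hp q hq t1 t2 ht1 ht2 hsum
  simp only [Set.mem_setOf_eq] at hp hq ⊢
  obtain ⟨hb1, hb1', hineq1⟩ := (RY_char p.1 p.2).mp hp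
  obtain ⟨hb2, hb2', hineq2⟩ := (RY_char q.1 q.2).mp hq
  have hfst : (t1 • p + t2 • q).1 = t1 * p.1 + t2 * q.1 := rfl
  have hsnd : (t1 • p + t2 • q).2 = t1 * p.2 + t2 * q.2 := rfl
  rw [hfst, hsnd]
  rw [RY_char]
  have ht2' : t2 = 1 - t1 := by linarith
  subst ht2'
  have hbmin : min p.2 q.2 ≤ t1 * p.2 + (1 - t1) * q.2 := by
    nlinarith [mul_nonneg ht1 (sub_nonneg.mpr (min_le_left p.2 q.2)),
      mul_nonneg ht2 (sub_nonneg.mpr (min_le_right p.2 q.2))]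
  have hbmax : t1 * p.2 + (1 - t1) * q.2 ≤ max p.2 q.2 := by
    nlinarith [mul_nonneg ht1 (sub_nonneg.mpr (le_max_left p.2 q.2)),
      mul_nonneg ht2 (sub_nonneg.mpr (le_max_right p.2 q.2))]
  refine ⟨lt_of_lt_of_le (lt_min hb1 hb2) hbmin,
    lt_of_le_of_lt hbmax (max_lt hb1' hb2'), ?_⟩
  have hkey := RY_key (1 + p.2) (1 + q.2) (2*p.1 + p.2 - 1) (2*q.1 + q.2 - 1) t1
    (by linarith) (by linarith) (by linarith) (by linarith) ht1 (by linarith)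
    (by nlinarith [hineq1]) (by nlinarith [hineq2])
  have e1 : (2 * (t1 * p.1 + (1 - t1) * q.1) + (t1 * p.2 + (1 - t1) * q.2) - 1) ^ 2 *
      (1 + (t1 * p.2 + (1 - t1) * q.2))
      = (t1*(2*p.1 + p.2 - 1) + (1-t1)*(2*q.1 + q.2 - 1))^2 *
        (t1*(1 + p.2) + (1-t1)*(1 + q.2)) := by ring
  have e2 : (1 - (t1 * p.2 + (1 - t1) * q.2)) *
      (1 - 4 * (t1 * p.2 + (1 - t1) * q.2) - (t1 * p.2 + (1 - t1) * q.2) ^ 2)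
      = (t1*(1 + p.2) + (1-t1)*(1 + q.2))^3 - 8*(t1*(1 + p.2) + (1-t1)*(1 + q.2)) + 8 := by
    ring
  rw [e1, e2]
  exact hkey
end

section
/- The union R_X ∪ R_Y ∪ R_Z ⊂ {(a,b) : a,b ≥ 0, a+b ≤ 1} is not convex, where, with g(α) = (1-α)/α and c = 1-a-b, R_X = {g(a) > g(b)+g(c)}, R_Y = {g(b) > g(a)+g(c)}, R_Z = {g(c) > g(a)+g(b)} (restricted to a,b,c > 0). -/
theorem nonMarkovian_union_not_convex :
    let g : ℝ → ℝ := fun α => (1 - α) / α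
    let dom : Set (ℝ × ℝ) := {x | 0 < x.1 ∧ 0 < x.2 ∧ x.1 + x.2 < 1}
    let RX := {x ∈ dom | g x.1 > g x.2 + g (1 - x.1 - x.2)}
    let RY := {x ∈ dom | g x.2 > g x.1 + g (1 - x.1 - x.2)}
    let RZ := {x ∈ dom | g (1 - x.1 - x.2) > g x.1 + g x.2}
    ¬ Convex ℝ (RX ∪ RY ∪ RZ) := by
  intro g dom RX RY RZ hconv
  have hx : ((1/50 : ℝ), (49/100 : ℝ)) ∈ RX ∪ RY ∪ RZ := by
    left; left
    constructor
    · refine ⟨by norm_num, by norm_num, by norm_num⟩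
    · show g (1/50) > g (49/100) + g (1 - 1/50 - 49/100)
      simp only [g]
      norm_num
  have hy : ((49/100 : ℝ), (1/50 : ℝ)) ∈ RX ∪ RY ∪ RZ := by
    left; right
    constructor
    · refine ⟨by norm_num, by norm_num, by norm_num⟩
    · show g (1/50) > g (49/100) + g (1 - 49/100 - 1/50)
      simp only [g]
      norm_num
  have hmid := hconv hx hy (by norm_num : (0:ℝ) ≤ 1/2)
    (by norm_num : (0:ℝ) ≤ 1/2) (by norm_num)
  have heq : (1/2 : ℝ) • ((1/50 : ℝ), (49/100 : ℝ)) +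
      (1/2 : ℝ) • ((49/100 : ℝ), (1/50 : ℝ)) = ((51/200 : ℝ), (51/200 : ℝ)) := by
    simp [Prod.ext_iff]
    norm_num
  rw [heq] at hmid
  rcases hmid with (⟨_, h⟩ | ⟨_, h⟩) | ⟨_, h⟩ <;>
  · simp only [g] at h
    norm_num at h
end

section
/- The complement in the simplex of R_X ∪ R_Y ∪ R_Z (the 'Markovian region' M = {(a,b): a,b ≥ 0, a+b ≤ 1, g(a) ≤ g(b)+g(c), g(b) ≤ g(a)+g(c), g(c) ≤ g(a)+g(b)} with g(α)=(1-α)/α, c=1-a-b, interpreted on the open simplex) is not convex. -/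
theorem markovian_region_not_convex :
    let g : ℝ → ℝ := fun α => (1 - α) / α
    let M : Set (ℝ × ℝ) := {x | 0 < x.1 ∧ 0 < x.2 ∧ x.1 + x.2 < 1 ∧
      g x.1 ≤ g x.2 + g (1 - x.1 - x.2) ∧
      g x.2 ≤ g x.1 + g (1 - x.1 - x.2) ∧
      g (1 - x.1 - x.2) ≤ g x.1 + g x.2}
    ¬ Convex ℝ M := by
  intro g M h
  have hP : ((8/10 : ℝ), (1/10 : ℝ)) ∈ M := by
    simp only [M, g, Set.mem_setOf_eq]
    norm_num
  have hQ : ((1/10 : ℝ), (8/10 : ℝ)) ∈ M := by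
    simp only [M, g, Set.mem_setOf_eq]
    norm_num
  have hmid := h hP hQ (a := 1/2) (b := 1/2) (by norm_num) (by norm_num) (by norm_num)
  simp only [M, g, Set.mem_setOf_eq, Prod.smul_mk, Prod.mk_add_mk, smul_eq_mul] at hmid
  norm_num at hmid
end

section
/- The Choi matrix B with entries B = (1/2)[[1+x₃,0,0,x₁+x₂],[0,1-x₃,x₁-x₂,0],[0,x₁-x₂,1-x₃,0],[x₁+x₂,0,0,1+x₃]] is positive semidefinite if and only if |1+x₃| ≥ |x₁+x₂| and |1-x₃| ≥ |x₁-x₂| (for real x₁,x₂,x₃ with |x_i| ≤ 1). -/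
/-!
Up to reordering the basis as (0, 3, 1, 2), `B` is block diagonal with the two symmetric
blocks `(1/2) [[1 + x₃, x₁ + x₂], [x₁ + x₂, 1 + x₃]]` and `(1/2) [[1 - x₃, x₁ - x₂], [x₁ - x₂, 1 - x₃]]`,
so its quadratic form splits as a sum of two binary forms `a (u² + w²) + 2 b u w`.
Such a form is nonnegative iff `|b| ≤ a`, since it equals `(a + b)/2 (u + w)² + (a - b)/2 (u - w)²`.
-/

/-- The quadratic form of the matrix `[[a, b], [b, a]]`. -/
def symmBinaryForm (a b u w : ℝ) : ℝ := a * (u ^ 2 + w ^ 2) + 2 * b * u * w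

theorem symmBinaryForm_eq (a b u w : ℝ) :
    symmBinaryForm a b u w = (a + b) / 2 * (u + w) ^ 2 + (a - b) / 2 * (u - w) ^ 2 := by
  unfold symmBinaryForm; ring

theorem symmBinaryForm_nonneg_iff (a b : ℝ) :
    (∀ u w, 0 ≤ symmBinaryForm a b u w) ↔ |b| ≤ a := by
  constructor
  · intro h
    have hplus := h 1 1
    have hminus := h 1 (-1)
    simp only [symmBinaryForm] at hplus hminus
    exact abs_le.mpr ⟨by linarith, by linarith⟩
  · intro h u w
    obtain ⟨hneg, hpos⟩ := abs_le.mp h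
    rw [symmBinaryForm_eq]
    have : 0 ≤ a + b := by linarith
    have : 0 ≤ a - b := by linarith
    positivity

theorem choi_posSemidef_iff_general (x₁ x₂ x₃ : ℝ)
    (h3 : |x₃| ≤ 1) :
    let B : Matrix (Fin 4) (Fin 4) ℝ :=
      (1/2 : ℝ) • !![1 + x₃, 0, 0, x₁ + x₂;
                     0, 1 - x₃, x₁ - x₂, 0;
                     0, x₁ - x₂, 1 - x₃, 0;
                     x₁ + x₂, 0, 0, 1 + x₃]
    B.PosSemidef ↔ (|x₁ + x₂| ≤ |1 + x₃| ∧ |x₁ - x₂| ≤ |1 - x₃|) := by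
  intro B
  have hB : B.IsHermitian := by
    ext i j
    fin_cases i <;> fin_cases j <;> simp [B]
  have hform : ∀ v : Fin 4 → ℝ, dotProduct (star v) (B.mulVec v) =
      (symmBinaryForm (1 + x₃) (x₁ + x₂) (v 0) (v 3) +
        symmBinaryForm (1 - x₃) (x₁ - x₂) (v 1) (v 2)) / 2 := by
    intro v
    simp [B, symmBinaryForm, Matrix.mulVec, dotProduct, Fin.sum_univ_four]
    ring
  obtain ⟨hx₃_ge, hx₃_le⟩ := abs_le.mp h3
  rw [abs_of_nonneg (by linarith : (0 : ℝ) ≤ 1 + x₃), abs_of_nonneg (by linarith : (0 : ℝ) ≤ 1 - x₃),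
    ← symmBinaryForm_nonneg_iff, ← symmBinaryForm_nonneg_iff,
    Matrix.posSemidef_iff_dotProduct_mulVec, and_iff_right hB]
  simp only [hform]
  constructor
  · intro h
    refine ⟨fun u w => ?_, fun u w => ?_⟩
    · have := h ![u, 0, 0, w]
      simp [symmBinaryForm] at this ⊢
      linarith
    · have := h ![0, u, w, 0]
      simp [symmBinaryForm] at this ⊢
      linarith
  · rintro ⟨hsum, hdiff⟩ v
    have := hsum (v 0) (v 3)
    have := hdiff (v 1) (v 2)
    linarith

theorem choi_posSemidef_iff (x₁ x₂ x₃ : ℝ)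
    (h1 : |x₁| ≤ 1) (h2 : |x₂| ≤ 1) (h3 : |x₃| ≤ 1) :
    let B : Matrix (Fin 4) (Fin 4) ℝ :=
      (1/2 : ℝ) • !![1 + x₃, 0, 0, x₁ + x₂;
                     0, 1 - x₃, x₁ - x₂, 0;
                     0, x₁ - x₂, 1 - x₃, 0;
                     x₁ + x₂, 0, 0, 1 + x₃]
    B.PosSemidef ↔ (|x₁ + x₂| ≤ |1 + x₃| ∧ |x₁ - x₂| ≤ |1 - x₃|) :=
  choi_posSemidef_iff_general x₁ x₂ x₃ h3
end
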